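/- Let γ ≥ 0, λ ∈ ℝ, and let C₀ ∈ ℝ. Define d₁(θ) = C₀(γ cos θ + sin θ) and α = λ(θ + ω₂). Then the function a₁(θ) = (λC₀(1+γ²)^{3/2}/8) · [ (2 - sin 3ω / sin ω) cos((λ-1)(θ+ω₂)) + 2cos((λ+1)(θ+ω₂)) - cos((λ+3)(θ+ω₂)) ] solves the ODE a₁''(θ) + (λ-1)² a₁(θ) = C₀(1+γ²)^{3/2} [ λ(λ+1) cos((λ+3)(θ+ω₂)) - λ² cos((λ+1)(θ+ω₂)) ] with boundary conditions a₁'(-ω₂) = 0 and a₁(ω₁) = 0, where ω = ω₁ + ω₂ and λ = -π/(2ω). -/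

import Mathlib

/-!
Each phase-shifted mode `cos (c (θ + ω₂))` satisfies `y'' = -c² y` and has vanishing derivative at
`θ = -ω₂`, so `a₁'' + (λ - 1)² a₁` only retains the `λ + 1` and `λ + 3` modes, with the factors
`(λ - 1)² - (λ + 1)² = -4λ` and `(λ - 1)² - (λ + 3)² = -8(λ + 1)`. At `θ = ω₁` the phase is
`(λ + k) ω = kω - π/2`, so each cosine becomes `sin (kω)` and the coefficient
`2 - sin 3ω / sin ω` is exactly the one that cancels the sum.
-/

open Real

section ShiftedCosines

variable (b : ℝ)

lemma hasDerivAt_cos_mul_add (c x : ℝ) :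
    HasDerivAt (fun y => cos (c * (y + b))) (-(c * sin (c * (x + b)))) x := by
  have h : HasDerivAt (fun y : ℝ => c * (y + b)) c x := by
    simpa using ((hasDerivAt_id x).add_const b).const_mul c
  simpa [mul_comm, Function.comp_def] using (hasDerivAt_cos (c * (x + b))).comp x h

lemma hasDerivAt_sin_mul_add (c x : ℝ) :
    HasDerivAt (fun y => sin (c * (y + b))) (c * cos (c * (x + b))) x := by
  have h : HasDerivAt (fun y : ℝ => c * (y + b)) c x := by
    simpa using ((hasDerivAt_id x).add_const b).const_mul c
  simpa [mul_comm, Function.comp_def] using (hasDerivAt_sin (c * (x + b))).comp x h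

noncomputable def cosSum3 (A B C p q r x : ℝ) : ℝ :=
  A * cos (p * (x + b)) + B * cos (q * (x + b)) + C * cos (r * (x + b))

variable (A B C p q r : ℝ)

lemma deriv_cosSum3 :
    deriv (cosSum3 b A B C p q r) = fun x =>
      -(A * p * sin (p * (x + b)) + B * q * sin (q * (x + b)) + C * r * sin (r * (x + b))) := by
  funext x
  refine HasDerivAt.deriv <| HasDerivAt.congr_deriv
    ((((hasDerivAt_cos_mul_add b p x).const_mul A).add
      ((hasDerivAt_cos_mul_add b q x).const_mul B)).add
      ((hasDerivAt_cos_mul_add b r x).const_mul C)) ?_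
  ring

lemma deriv_deriv_cosSum3 (x : ℝ) :
    deriv (deriv (cosSum3 b A B C p q r)) x =
      -(A * p ^ 2 * cos (p * (x + b)) + B * q ^ 2 * cos (q * (x + b)) +
        C * r ^ 2 * cos (r * (x + b))) := by
  rw [deriv_cosSum3]
  refine HasDerivAt.deriv <| HasDerivAt.congr_deriv
    ((((hasDerivAt_sin_mul_add b p x).const_mul (A * p)).add
      ((hasDerivAt_sin_mul_add b q x).const_mul (B * q))).add
      ((hasDerivAt_sin_mul_add b r x).const_mul (C * r))).neg ?_
  ring

lemma deriv_deriv_cosSum3_add (x : ℝ) :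
    deriv (deriv (cosSum3 b A B C p q r)) x + p ^ 2 * cosSum3 b A B C p q r x =
      (p ^ 2 - q ^ 2) * B * cos (q * (x + b)) + (p ^ 2 - r ^ 2) * C * cos (r * (x + b)) := by
  rw [deriv_deriv_cosSum3, cosSum3]
  ring

lemma deriv_cosSum3_neg : deriv (cosSum3 b A B C p q r) (-b) = 0 := by
  simp [deriv_cosSum3]

end ShiftedCosines

lemma cos_add_mul_of_mul_eq_neg_pi_div_two {lam ω : ℝ} (h : lam * ω = -(π / 2)) (k : ℝ) :
    cos ((lam + k) * ω) = sin (k * ω) := by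
  rw [add_mul, h, neg_add_eq_sub, cos_sub_pi_div_two]

-- Also true where `sin x = 0` and the division is junk, since then `sin (3 * x) = 0` as well.
lemma two_sub_sin_three_mul_div_sin_mul_sin (x : ℝ) :
    (2 - sin (3 * x) / sin x) * sin x = 2 * sin x - sin (3 * x) := by
  by_cases hx : sin x = 0
  · simp [hx, sin_three_mul]
  · field_simp

theorem statement13_general (γ lam C₀ ω ω₁ ω₂ : ℝ) (hω : ω = ω₁ + ω₂)
    (hωpos : 0 < ω) (hlam : lam = -π / (2 * ω))
    (a₁ : ℝ → ℝ)
    (ha₁ : a₁ = fun θ => (lam * C₀ * (1 + γ ^ 2) ^ ((3 : ℝ) / 2) / 8) *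
      ((2 - Real.sin (3 * ω) / Real.sin ω) * Real.cos ((lam - 1) * (θ + ω₂)) +
        2 * Real.cos ((lam + 1) * (θ + ω₂)) - Real.cos ((lam + 3) * (θ + ω₂)))) :
    (∀ θ : ℝ, deriv (deriv a₁) θ + (lam - 1) ^ 2 * a₁ θ =
      C₀ * (1 + γ ^ 2) ^ ((3 : ℝ) / 2) *
        (lam * (lam + 1) * Real.cos ((lam + 3) * (θ + ω₂)) -
          lam ^ 2 * Real.cos ((lam + 1) * (θ + ω₂)))) ∧
    deriv a₁ (-ω₂) = 0 ∧ a₁ ω₁ = 0 := by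
  set K := lam * C₀ * (1 + γ ^ 2) ^ ((3 : ℝ) / 2) / 8 with hK
  set A := 2 - sin (3 * ω) / sin ω
  have ha : a₁ = cosSum3 ω₂ (K * A) (2 * K) (-K) (lam - 1) (lam + 1) (lam + 3) := by
    rw [ha₁]
    funext θ
    rw [cosSum3]
    ring
  have hlamω : lam * ω = -(π / 2) := by
    rw [hlam]
    field_simp
  refine ⟨fun θ => ?_, ?_, ?_⟩
  · rw [ha, deriv_deriv_cosSum3_add, hK]
    ring
  · rw [ha, deriv_cosSum3_neg]
  · have hcos (k : ℝ) := cos_add_mul_of_mul_eq_neg_pi_div_two hlamω k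
    rw [ha, cosSum3, ← hω, sub_eq_add_neg, hcos, hcos, hcos, neg_one_mul, one_mul, sin_neg]
    linear_combination -K * two_sub_sin_three_mul_div_sin_mul_sin ω

theorem statement13 (γ lam C₀ ω ω₁ ω₂ : ℝ) (hγ : 0 ≤ γ) (hω : ω = ω₁ + ω₂)
    (hωpos : 0 < ω) (hωlt : ω < π / 2) (hlam : lam = -π / (2 * ω))
    (a₁ : ℝ → ℝ)
    (ha₁ : a₁ = fun θ => (lam * C₀ * (1 + γ ^ 2) ^ ((3 : ℝ) / 2) / 8) *
      ((2 - Real.sin (3 * ω) / Real.sin ω) * Real.cos ((lam - 1) * (θ + ω₂)) +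
        2 * Real.cos ((lam + 1) * (θ + ω₂)) - Real.cos ((lam + 3) * (θ + ω₂)))) :
    (∀ θ : ℝ, deriv (deriv a₁) θ + (lam - 1) ^ 2 * a₁ θ =
      C₀ * (1 + γ ^ 2) ^ ((3 : ℝ) / 2) *
        (lam * (lam + 1) * Real.cos ((lam + 3) * (θ + ω₂)) -
          lam ^ 2 * Real.cos ((lam + 1) * (θ + ω₂)))) ∧
    deriv a₁ (-ω₂) = 0 ∧ a₁ ω₁ = 0 :=
  statement13_general γ lam C₀ ω ω₁ ω₂ hω hωpos hlam a₁ ha₁
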